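/- Let 0 ≤ c₃ < c₁ and 0 ≤ c₄ < c₂, let f : [c₄,∞) → [0,∞) and g : [c₃,∞) → [0,∞) be continuous, nondecreasing, strictly positive on (c₄,∞) and (c₃,∞) respectively, with ∫_{c₄}^{∞} f(s) ds = ∫_{c₃}^{∞} g(θ) dθ = ∞. Set F(z) = ∫_{c₄}^{z} f(s) ds and G(w) = ∫_{c₃}^{w} g(θ) dθ, with inverse function F⁻¹ of F. Let 0 < ε < 1 < K with ε·G(c₁) ≤ F(c₂) ≤ K·G(c₁), and suppose I := ∫_{c₁}^{∞} ds / f(F⁻¹(ε·G(s))) < ∞. Then there is no global solution: if w, z : [0,T) → ℝ are differentiable with w(0) = c₁, z(0) = c₂, w ≥ c₃, z ≥ c₄, and w' = f(z), z' = g(w) on [0,T), then necessarily T ≤ I. -/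

import Mathlib

/-!
Along a solution the energy `F(z) - ε G(w)` has derivative `(1 - ε) f(z) g(w) ≥ 0`, so it stays
nonnegative and `z ≥ F⁻¹(ε G(w))`. Hence `w' = f(z) ≥ f(F⁻¹(ε G(w))) = 1 / φ(w)` with
`φ(s) = 1 / f(F⁻¹(ε G(s)))`, and substituting `s = w(τ)` gives `t ≤ ∫_{c₁}^{w(t)} φ ≤ I`
for every `t < T`. As `w` is monotone, the substitution needs only integrability of `φ`.
-/

open Set MeasureTheory

section Primitive

variable {f : ℝ → ℝ} {a : ℝ}

theorem hasDerivAt_integral_of_continuousOn_Ici (hf : ContinuousOn f (Ici a)) {x : ℝ}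
    (hx : a < x) : HasDerivAt (fun u => ∫ s in a..u, f s) (f x) x :=
  intervalIntegral.integral_hasDerivAt_right
    ((hf.mono Icc_subset_Ici_self).intervalIntegrable_of_Icc hx.le)
    ((hf.mono Ioi_subset_Ici_self).stronglyMeasurableAtFilter isOpen_Ioi x hx)
    ((hf x hx.le).continuousAt (Ici_mem_nhds hx))

theorem strictMonoOn_integral_of_pos (hf : ContinuousOn f (Ici a))
    (hpos : ∀ s ∈ Ioi a, 0 < f s) : StrictMonoOn (fun u => ∫ s in a..u, f s) (Ici a) := by
  intro x hx y hy hxy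
  have hint : ∀ b ∈ Ici a, IntervalIntegrable f volume a b := fun b hb =>
    (hf.mono Icc_subset_Ici_self).intervalIntegrable_of_Icc hb
  have hxy_pos : 0 < ∫ s in x..y, f s :=
    intervalIntegral.intervalIntegral_pos_of_pos_on
      ((hf.mono (Icc_subset_Ici_iff hxy.le |>.2 hx)).intervalIntegrable_of_Icc hxy.le)
      (fun s hs => hpos s (hx.trans_lt hs.1)) hxy
  have := intervalIntegral.integral_interval_sub_left (hint y hy) (hint x hx)
  simp only
  linarith

end Primitive

theorem Convex.monotoneOn_of_hasDerivAt_nonneg {D : Set ℝ} (hD : Convex ℝ D) {u u' : ℝ → ℝ}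
    (hu : ∀ x ∈ D, HasDerivAt u (u' x) x) (hu' : ∀ x ∈ D, 0 ≤ u' x) : MonotoneOn u D :=
  monotoneOn_of_hasDerivWithinAt_nonneg hD
    (fun x hx => (hu x hx).continuousAt.continuousWithinAt)
    (fun x hx => (hu x (interior_subset hx)).hasDerivWithinAt)
    (fun x hx => hu' x (interior_subset hx))

theorem monotoneOn_comp_sub_mul_comp {f g F G w z : ℝ → ℝ} {D : Set ℝ} (hD : Convex ℝ D)
    {ε : ℝ} (hε : ε ≤ 1)
    (hF : ∀ t ∈ D, HasDerivAt F (f (z t)) (z t)) (hG : ∀ t ∈ D, HasDerivAt G (g (w t)) (w t))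
    (hw : ∀ t ∈ D, HasDerivAt w (f (z t)) t) (hz : ∀ t ∈ D, HasDerivAt z (g (w t)) t)
    (hfg : ∀ t ∈ D, 0 ≤ f (z t) * g (w t)) :
    MonotoneOn (fun t => F (z t) - ε * G (w t)) D :=
  hD.monotoneOn_of_hasDerivAt_nonneg
    (fun t ht => ((hF t ht).comp t (hz t ht)).sub (((hG t ht).comp t (hw t ht)).const_mul ε))
    (fun t ht => by nlinarith [hfg t ht])

theorem le_and_mul_le_of_solution {f g F G w z : ℝ → ℝ} {c₃ c₄ ε T : ℝ} (hε : ε ≤ 1)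
    (hF : ∀ x, c₄ < x → HasDerivAt F (f x) x) (hG : ∀ x, c₃ < x → HasDerivAt G (g x) x)
    (hf : ∀ s ∈ Ici c₄, 0 ≤ f s) (hg : ∀ s ∈ Ici c₃, 0 ≤ g s)
    (hw_ge : ∀ t ∈ Ico 0 T, c₃ ≤ w t) (hz_ge : ∀ t ∈ Ico 0 T, c₄ ≤ z t)
    (hw' : ∀ t ∈ Ico 0 T, HasDerivAt w (f (z t)) t)
    (hz' : ∀ t ∈ Ico 0 T, HasDerivAt z (g (w t)) t)
    (hw0 : c₃ < w 0) (hz0 : c₄ < z 0) (h0 : ε * G (w 0) ≤ F (z 0))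
    {t : ℝ} (ht : t ∈ Ico 0 T) : w 0 ≤ w t ∧ ε * G (w t) ≤ F (z t) := by
  have h0T : (0 : ℝ) ∈ Ico 0 T := ⟨le_rfl, ht.1.trans_lt ht.2⟩
  have hw_mono : MonotoneOn w (Ico 0 T) :=
    (convex_Ico 0 T).monotoneOn_of_hasDerivAt_nonneg hw' fun s hs => hf _ (hz_ge s hs)
  have hz_mono : MonotoneOn z (Ico 0 T) :=
    (convex_Ico 0 T).monotoneOn_of_hasDerivAt_nonneg hz' fun s hs => hg _ (hw_ge s hs)
  have hH := monotoneOn_comp_sub_mul_comp (convex_Ico 0 T) hε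
    (fun s hs => hF _ (hz0.trans_le (hz_mono h0T hs hs.1)))
    (fun s hs => hG _ (hw0.trans_le (hw_mono h0T hs hs.1)))
    hw' hz' fun s hs => mul_nonneg (hf _ (hz_ge s hs)) (hg _ (hw_ge s hs))
  have := hH h0T ht ht.1
  exact ⟨hw_mono h0T ht ht.1, by simp only at this; linarith⟩

theorem one_le_mul_one_div_of_le {f F : ℝ → ℝ} {c x₀ x : ℝ} (hf_pos : ∀ s ∈ Ioi c, 0 < f s)
    (hf_mono : MonotoneOn f (Ici c)) (hF : StrictMonoOn F (Ici c)) (hx₀ : x₀ ∈ Ici c)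
    (hx : x ∈ Ici c) (hcx₀ : F c < F x₀) (hx₀x : F x₀ ≤ F x) : 1 ≤ f x * (1 / f x₀) := by
  have hfx₀ : 0 < f x₀ := hf_pos x₀ ((hF.lt_iff_lt self_mem_Ici hx₀).1 hcx₀)
  rw [mul_one_div, one_le_div hfx₀]
  exact hf_mono hx₀ hx ((hF.le_iff_le hx₀ hx).1 hx₀x)

section TravelTime

variable {w v φ : ℝ → ℝ}

theorem le_setIntegral_of_one_le_deriv_mul_on_Ioo {t : ℝ} (ht : 0 ≤ t)
    (hw : ContinuousOn w (Icc 0 t)) (hw' : ∀ x ∈ Ioo 0 t, HasDerivAt w (v x) x)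
    (hv : ∀ x ∈ Ioo 0 t, 0 ≤ v x) (hφ : IntegrableOn φ (Ici (w 0)))
    (hφ₀ : ∀ s ∈ Ici (w 0), 0 ≤ φ s) (hle : ∀ x ∈ Ioo 0 t, 1 ≤ v x * φ (w x)) :
    t ≤ ∫ s in Ici (w 0), φ s := by
  have hsub : Icc (w 0) (w t) ⊆ Ici (w 0) := Icc_subset_Ici_self
  have hint : IntegrableOn (fun x => v x • φ (w x)) (Icc 0 t) :=
    (integrableOn_Icc_deriv_smul_iff_of_deriv_nonneg hw hw' hv ht).2 (hφ.mono_set hsub)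
  calc t = ∫ _ in Ioo 0 t, (1 : ℝ) := by simp [ht]
    _ ≤ ∫ x in Ioo 0 t, v x • φ (w x) :=
        setIntegral_mono_on (integrableOn_const (by simp)) (hint.mono_set Ioo_subset_Icc_self)
          measurableSet_Ioo hle
    _ = ∫ s in Icc (w 0) (w t), φ s := by
        rw [← integral_Icc_eq_integral_Ioo, integral_Icc_deriv_smul_of_deriv_nonneg hw hw' hv ht]
    _ ≤ ∫ s in Ici (w 0), φ s :=
        setIntegral_mono_set hφ ((ae_restrict_iff' measurableSet_Ici).2 (ae_of_all _ hφ₀))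
          hsub.eventuallyLE

theorem le_setIntegral_of_one_le_deriv_mul_on_Ico {T : ℝ}
    (hw' : ∀ t ∈ Ico 0 T, HasDerivAt w (v t) t) (hv : ∀ t ∈ Ico 0 T, 0 ≤ v t)
    (hφ : IntegrableOn φ (Ici (w 0))) (hφ₀ : ∀ s ∈ Ici (w 0), 0 ≤ φ s)
    (hle : ∀ t ∈ Ico 0 T, 1 ≤ v t * φ (w t)) : T ≤ ∫ s in Ici (w 0), φ s := by
  refine le_of_forall_lt_imp_le_of_dense fun t htT => ?_
  rcases lt_or_ge t 0 with ht | ht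
  · exact ht.le.trans (setIntegral_nonneg measurableSet_Ici hφ₀)
  have hsub : Icc 0 t ⊆ Ico 0 T := Icc_subset_Ico_right htT
  have hsub' : Ioo 0 t ⊆ Ico 0 T := Ioo_subset_Icc_self.trans hsub
  exact le_setIntegral_of_one_le_deriv_mul_on_Ioo ht
    (fun x hx => (hw' x (hsub hx)).continuousAt.continuousWithinAt)
    (fun x hx => hw' x (hsub' hx)) (fun x hx => hv x (hsub' hx)) hφ hφ₀
    (fun x hx => hle x (hsub' hx))

end TravelTime

theorem blowup_thmAprime_general
    (c₁ c₂ c₃ c₄ ε T : ℝ)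
    (hc₃₁ : c₃ < c₁) (hc₄₂ : c₄ < c₂)
    (f g : ℝ → ℝ)
    (hf_cont : ContinuousOn f (Ici c₄)) (hg_cont : ContinuousOn g (Ici c₃))
    (hf_nonneg : ∀ s ∈ Ici c₄, 0 ≤ f s) (hg_nonneg : ∀ s ∈ Ici c₃, 0 ≤ g s)
    (hf_mono : MonotoneOn f (Ici c₄))
    (hf_pos : ∀ s ∈ Ioi c₄, 0 < f s) (hg_pos : ∀ s ∈ Ioi c₃, 0 < g s)
    (F G Finv : ℝ → ℝ)
    (hF : ∀ x, F x = ∫ s in c₄..x, f s) (hG : ∀ x, G x = ∫ θ in c₃..x, g θ)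
    (hFinv_mem : ∀ y ∈ Ici (0 : ℝ), Finv y ∈ Ici c₄)
    (hFinv_right : ∀ y ∈ Ici (0 : ℝ), F (Finv y) = y)
    (hε : 0 < ε) (hε1 : ε < 1)
    (hFG1 : ε * G c₁ ≤ F c₂)
    (hI : IntegrableOn (fun s => 1 / f (Finv (ε * G s))) (Ici c₁))
    (w z : ℝ → ℝ)
    (hw0 : w 0 = c₁) (hz0 : z 0 = c₂)
    (hw_ge : ∀ t ∈ Ico (0 : ℝ) T, c₃ ≤ w t)
    (hz_ge : ∀ t ∈ Ico (0 : ℝ) T, c₄ ≤ z t)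
    (hw' : ∀ t ∈ Ico (0 : ℝ) T, HasDerivAt w (f (z t)) t)
    (hz' : ∀ t ∈ Ico (0 : ℝ) T, HasDerivAt z (g (w t)) t) :
    T ≤ ∫ s in Ici c₁, 1 / f (Finv (ε * G s)) := by
  have hFsm : StrictMonoOn F (Ici c₄) := funext hF ▸ strictMonoOn_integral_of_pos hf_cont hf_pos
  have hGsm : StrictMonoOn G (Ici c₃) := funext hG ▸ strictMonoOn_integral_of_pos hg_cont hg_pos
  have hεG : ∀ s ∈ Ici c₁, 0 < ε * G s := fun s hs => mul_pos hε <| by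
    simpa [hG] using hGsm self_mem_Ici (hc₃₁.le.trans hs) (hc₃₁.trans_le hs)
  have hsol : ∀ t ∈ Ico 0 T, c₁ ≤ w t ∧ ε * G (w t) ≤ F (z t) := fun t ht => hw0 ▸
    le_and_mul_le_of_solution hε1.le
      (fun x hx => funext hF ▸ hasDerivAt_integral_of_continuousOn_Ici hf_cont hx)
      (fun x hx => funext hG ▸ hasDerivAt_integral_of_continuousOn_Ici hg_cont hx)
      hf_nonneg hg_nonneg hw_ge hz_ge hw' hz' (hw0 ▸ hc₃₁) (hz0 ▸ hc₄₂) (hw0 ▸ hz0 ▸ hFG1) ht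
  rw [← hw0] at hI ⊢
  refine le_setIntegral_of_one_le_deriv_mul_on_Ico hw' (fun t ht => hf_nonneg _ (hz_ge t ht)) hI
    (fun s hs => one_div_nonneg.2 (hf_nonneg _ (hFinv_mem _ (hεG s (hw0 ▸ hs)).le)))
    fun t ht => ?_
  obtain ⟨hw₁, hH⟩ := hsol t ht
  have hy := (hεG _ hw₁).le
  refine one_le_mul_one_div_of_le hf_pos hf_mono hFsm (hFinv_mem _ hy) (hz_ge t ht) ?_ ?_
  · simpa [hFinv_right _ hy, hF] using hεG _ hw₁
  · rwa [hFinv_right _ hy]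

/-- Theorem A′, part 1 (blowup case) of the paper: if
`I = ∫_{c₁}^∞ ds / f(F⁻¹(ε G(s))) < ∞`, then any solution of `w' = f(z)`, `z' = g(w)`
on `[0,T)` satisfies `T ≤ I`; in particular there is no global solution. -/
theorem blowup_thmAprime
    (c₁ c₂ c₃ c₄ ε K T : ℝ)
    (hc₃ : 0 ≤ c₃) (hc₃₁ : c₃ < c₁) (hc₄ : 0 ≤ c₄) (hc₄₂ : c₄ < c₂)
    (f g : ℝ → ℝ)
    (hf_cont : ContinuousOn f (Ici c₄)) (hg_cont : ContinuousOn g (Ici c₃))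
    (hf_nonneg : ∀ s ∈ Ici c₄, 0 ≤ f s) (hg_nonneg : ∀ s ∈ Ici c₃, 0 ≤ g s)
    (hf_mono : MonotoneOn f (Ici c₄)) (hg_mono : MonotoneOn g (Ici c₃))
    (hf_pos : ∀ s ∈ Ioi c₄, 0 < f s) (hg_pos : ∀ s ∈ Ioi c₃, 0 < g s)
    (hf_div : ¬ IntegrableOn f (Ici c₄)) (hg_div : ¬ IntegrableOn g (Ici c₃))
    (F G Finv : ℝ → ℝ)
    (hF : ∀ x, F x = ∫ s in c₄..x, f s) (hG : ∀ x, G x = ∫ θ in c₃..x, g θ)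
    (hFinv_mem : ∀ y ∈ Ici (0 : ℝ), Finv y ∈ Ici c₄)
    (hFinv_right : ∀ y ∈ Ici (0 : ℝ), F (Finv y) = y)
    (hFinv_left : ∀ x ∈ Ici c₄, Finv (F x) = x)
    (hε : 0 < ε) (hε1 : ε < 1) (hK : 1 < K)
    (hFG1 : ε * G c₁ ≤ F c₂) (hFG2 : F c₂ ≤ K * G c₁)
    (hI : IntegrableOn (fun s => 1 / f (Finv (ε * G s))) (Ici c₁))
    (w z : ℝ → ℝ)
    (hw0 : w 0 = c₁) (hz0 : z 0 = c₂)
    (hw_ge : ∀ t ∈ Ico (0 : ℝ) T, c₃ ≤ w t)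
    (hz_ge : ∀ t ∈ Ico (0 : ℝ) T, c₄ ≤ z t)
    (hw' : ∀ t ∈ Ico (0 : ℝ) T, HasDerivAt w (f (z t)) t)
    (hz' : ∀ t ∈ Ico (0 : ℝ) T, HasDerivAt z (g (w t)) t) :
    T ≤ ∫ s in Ici c₁, 1 / f (Finv (ε * G s)) :=
  blowup_thmAprime_general c₁ c₂ c₃ c₄ ε T hc₃₁ hc₄₂ f g hf_cont hg_cont hf_nonneg hg_nonneg hf_mono
    hf_pos hg_pos F G Finv hF hG hFinv_mem hFinv_right hε hε1 hFG1 hI w z hw0 hz0 hw_ge hz_ge hw'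
    hz'
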